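/- arXiv:2505.05092 — 3 statements merged into one kernel-verified Lean document; each statement's English description precedes it below -/
import Mathlib

section
/- For an inhomogeneous Galton-Watson tree and k > 0, Cov(Z̃_n, Z̃_{n+k}) = p_{n+k} p_n m_{n+k} (s_n²/m_n − 1), where Z̃_n is the number of leaves in generation n, p_n = f_n(0), m_n = E(Z_n) > 0, and s_n² = Var(Z_n). -/
/-!
Write `𝓕ₘ` for the σ-algebra generated by the offspring numbers of generations `< m`; `Zₘ` is
`𝓕ₘ`-measurable and independent of the offspring numbers of generation `m`. Hence, for every
`𝓕ₘ`-measurable `W ≥ 0`, Wald's identity gives `E[W Zₘ₊₁] = μₘ E[W Zₘ]` and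
`E[W Z̃ₘ] = pₘ E[W Zₘ]`, while expanding the product of two sums over generation `n` gives
`E[Z̃ₙ Zₙ₊₁] = pₙ μₙ E[Zₙ(Zₙ - 1)]`, the diagonal terms vanishing because a leaf has no children.
Iterating from `n + 1` to `n + k`, the offspring means cancel against those in `mₙ₊ₖ`:
`E[Z̃ₙ Z̃ₙ₊ₖ] mₙ = pₙ₊ₖ pₙ E[Zₙ(Zₙ - 1)] mₙ₊ₖ`, and `E[Zₙ(Zₙ - 1)] = sₙ² + mₙ² - mₙ` gives the
formula. The moments are computed as lower Lebesgue integrals, so that integrability only enters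
when passing to real integrals at the end.
-/

open MeasureTheory ProbabilityTheory Finset

noncomputable def cov {Ω : Type*} [MeasurableSpace Ω] (P : Measure Ω) (f g : Ω → ℝ) : ℝ :=
  ∫ ω, (f ω - ∫ ω', f ω' ∂P) * (g ω - ∫ ω', g ω' ∂P) ∂P

open scoped ENNReal

section RandomSums

variable {Ω : Type*} {mΩ : MeasurableSpace Ω}

theorem measurable_sum_range_of_measurable {M : Type*} [AddCommMonoid M] [MeasurableSpace M]
    [MeasurableAdd₂ M] {N : Ω → ℕ} {f : ℕ → Ω → M} (hN : Measurable N)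
    (hf : ∀ i, Measurable (f i)) : Measurable fun ω => ∑ i ∈ range (N ω), f i ω := by
  have : Measurable fun q : Ω × ℕ => ∑ i ∈ range q.2, f i q.1 :=
    measurable_from_prod_countable_left fun r => Finset.measurable_sum (range r) fun i _ => hf i
  exact this.comp (measurable_id.prodMk hN)

variable {P : Measure Ω} {ι : Type*} [Countable ι] {s : Ω → Finset ι}
  {f : ι → Ω → ℝ≥0∞}

theorem lintegral_finset_sum_eq_tsum (hs : ∀ i, MeasurableSet {ω | i ∈ s ω})
    (hf : ∀ i, Measurable (f i)) :
    ∫⁻ ω, ∑ i ∈ s ω, f i ω ∂P = ∑' i, ∫⁻ ω in {ω | i ∈ s ω}, f i ω ∂P := by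
  have hpt : ∀ ω, ∑ i ∈ s ω, f i ω = ∑' i, {ω | i ∈ s ω}.indicator (f i) ω := fun ω => by
    rw [tsum_eq_sum (s := s ω) (f := fun i => {ω | i ∈ s ω}.indicator (f i) ω)
      fun i hi => Set.indicator_of_notMem (s := {ω | i ∈ s ω}) hi _]
    exact sum_congr rfl fun i hi => (Set.indicator_of_mem (s := {ω | i ∈ s ω}) hi _).symm
  simp_rw [hpt]
  rw [lintegral_tsum fun i => ((hf i).indicator (hs i)).aemeasurable]
  simp_rw [lintegral_indicator (hs _)]

theorem lintegral_finset_sum_eq_mul (hs : ∀ i, MeasurableSet {ω | i ∈ s ω})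
    (hf : ∀ i, Measurable (f i)) {W : Ω → ℝ≥0∞} (hW : Measurable W) {c : ℝ≥0∞}
    (hterm : ∀ i, ∫⁻ ω in {ω | i ∈ s ω}, f i ω ∂P = c * ∫⁻ ω in {ω | i ∈ s ω}, W ω ∂P) :
    ∫⁻ ω, ∑ i ∈ s ω, f i ω ∂P = c * ∫⁻ ω, W ω * #(s ω) ∂P := by
  have hW' : ∫⁻ ω, W ω * #(s ω) ∂P = ∫⁻ ω, ∑ i ∈ s ω, W ω ∂P := by simp [mul_comm]
  rw [lintegral_finset_sum_eq_tsum hs hf, hW', lintegral_finset_sum_eq_tsum hs fun _ => hW,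
    ← ENNReal.tsum_mul_left]
  exact tsum_congr hterm

end RandomSums

theorem Finset.sum_mul_sum_eq_sum_offDiag_add {ι R : Type*} [CommSemiring R] [DecidableEq ι]
    (s : Finset ι) (g h : ι → R) :
    (∑ i ∈ s, g i) * ∑ j ∈ s, h j = ∑ q ∈ s.offDiag, g q.1 * h q.2 + ∑ i ∈ s, g i * h i := by
  rw [sum_mul_sum, ← sum_product', ← diag_union_offDiag, sum_union (disjoint_diag_offDiag s),
    sum_diag, add_comm]

section GeneratedSigma

variable {Ω ι β : Type*} [MeasurableSpace β] {X : ι → Ω → β} {S T : Set ι}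

abbrev sigmaOf (X : ι → Ω → β) (S : Set ι) : MeasurableSpace Ω :=
  ⨆ q ∈ S, MeasurableSpace.comap (X q) inferInstance

theorem sigmaOf_mono (h : S ⊆ T) : sigmaOf X S ≤ sigmaOf X T :=
  biSup_mono h

theorem measurable_sigmaOf {q : ι} (hq : q ∈ S) : Measurable[sigmaOf X S] (X q) :=
  Measurable.of_comap_le (le_iSup₂ (f := fun q _ => MeasurableSpace.comap (X q) _) q hq)

variable [MeasurableSpace Ω] {P : Measure Ω}

theorem sigmaOf_le (hX : ∀ q, Measurable (X q)) : sigmaOf X S ≤ ‹MeasurableSpace Ω› :=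
  iSup₂_le fun q _ => (hX q).comap_le

theorem lintegral_mul_eq_of_sigmaOf (hX : ∀ q, Measurable (X q)) (hindep : iIndepFun X P)
    (hST : Disjoint S T) {f g : Ω → ℝ≥0∞} (hf : Measurable[sigmaOf X S] f)
    (hg : Measurable[sigmaOf X T] g) :
    ∫⁻ ω, f ω * g ω ∂P = (∫⁻ ω, f ω ∂P) * ∫⁻ ω, g ω ∂P :=
  lintegral_mul_eq_lintegral_mul_lintegral_of_independent_measurableSpace (sigmaOf_le hX)
    (sigmaOf_le hX) (indep_iSup_of_disjoint (fun q => (hX q).comap_le) hindep hST) hf hg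

theorem lintegral_mul_comp_of_notMem (hX : ∀ q, Measurable (X q)) (hindep : iIndepFun X P)
    {q : ι} (hq : q ∉ S) {F : Ω → ℝ≥0∞} (hF : Measurable[sigmaOf X S] F) {g : β → ℝ≥0∞}
    (hg : Measurable g) :
    ∫⁻ ω, F ω * g (X q ω) ∂P = (∫⁻ ω, F ω ∂P) * ∫⁻ ω, g (X q ω) ∂P :=
  lintegral_mul_eq_of_sigmaOf hX hindep (Set.disjoint_singleton_right.2 hq) hF
    (hg.comp (measurable_sigmaOf rfl))

end GeneratedSigma

section OffspringSums

variable {Ω : Type*} [MeasurableSpace Ω] {P : Measure Ω} {X : ℕ × ℕ → Ω → ℕ}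
  {S : Set (ℕ × ℕ)} {m : ℕ}

-- Wald's identity.
theorem lintegral_mul_sum_range (hX : ∀ q, Measurable (X q)) (hindep : iIndepFun X P)
    (hident : ∀ i, IdentDistrib (X (m, i)) (X (m, 0)) P P) (hS : ∀ i, (m, i) ∉ S)
    {W : Ω → ℝ≥0∞} (hW : Measurable[sigmaOf X S] W) {N : Ω → ℕ}
    (hN : Measurable[sigmaOf X S] N) (g : ℕ → ℝ≥0∞) :
    ∫⁻ ω, W ω * ∑ i ∈ range (N ω), g (X (m, i) ω) ∂P =
      (∫⁻ ω, g (X (m, 0) ω) ∂P) * ∫⁻ ω, W ω * N ω ∂P := by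
  have hle := sigmaOf_le (S := S) hX
  have hA : ∀ i, MeasurableSet[sigmaOf X S] {ω | i ∈ range (N ω)} := fun i =>
    hN (MeasurableSet.of_discrete (s := {n | i ∈ range n}))
  have hg : ∀ i, ∫⁻ ω, g (X (m, i) ω) ∂P = ∫⁻ ω, g (X (m, 0) ω) ∂P := fun i =>
    ((hident i).comp measurable_from_top).lintegral_eq
  have hterm : ∀ i, ∫⁻ ω in {ω | i ∈ range (N ω)}, W ω * g (X (m, i) ω) ∂P =
      (∫⁻ ω, g (X (m, 0) ω) ∂P) * ∫⁻ ω in {ω | i ∈ range (N ω)}, W ω ∂P := fun i => by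
    rw [← lintegral_indicator (hle _ (hA i)), ← lintegral_indicator (hle _ (hA i))]
    simp_rw [Set.indicator_mul_left]
    rw [lintegral_mul_comp_of_notMem hX hindep (hS i) (hW.indicator (hA i)) measurable_from_top,
      hg, mul_comm]
  simp_rw [mul_sum]
  rw [lintegral_finset_sum_eq_mul (f := fun i ω => W ω * g (X (m, i) ω)) (fun i => hle _ (hA i))
    (fun i => (hW.mono hle le_rfl).mul (measurable_from_top.comp (hX _))) (hW.mono hle le_rfl)
    hterm]
  simp

theorem lintegral_sum_mul_sum (hX : ∀ q, Measurable (X q)) (hindep : iIndepFun X P)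
    (hident : ∀ i, IdentDistrib (X (m, i)) (X (m, 0)) P P) (hS : ∀ i, (m, i) ∉ S)
    {N : Ω → ℕ} (hN : Measurable[sigmaOf X S] N) (g h : ℕ → ℝ≥0∞) :
    ∫⁻ ω, (∑ i ∈ range (N ω), g (X (m, i) ω)) * ∑ j ∈ range (N ω), h (X (m, j) ω) ∂P =
      (∫⁻ ω, g (X (m, 0) ω) ∂P) * (∫⁻ ω, h (X (m, 0) ω) ∂P) *
          ∫⁻ ω, ((N ω * (N ω - 1) : ℕ) : ℝ≥0∞) ∂P +
        (∫⁻ ω, g (X (m, 0) ω) * h (X (m, 0) ω) ∂P) * ∫⁻ ω, (N ω : ℝ≥0∞) ∂P := by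
  have hle := sigmaOf_le (S := S) hX
  have hA : ∀ q : ℕ × ℕ, MeasurableSet[sigmaOf X S] {ω | q ∈ (range (N ω)).offDiag} := fun q =>
    hN (MeasurableSet.of_discrete (s := {n | q ∈ (range n).offDiag}))
  have hmeas : ∀ q : ℕ × ℕ, Measurable fun ω => g (X (m, q.1) ω) * h (X (m, q.2) ω) :=
    fun q => (measurable_from_top.comp (hX _)).mul (measurable_from_top.comp (hX _))
  have hg : ∀ i, ∫⁻ ω, g (X (m, i) ω) ∂P = ∫⁻ ω, g (X (m, 0) ω) ∂P := fun i =>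
    ((hident i).comp measurable_from_top).lintegral_eq
  have hh : ∀ i, ∫⁻ ω, h (X (m, i) ω) ∂P = ∫⁻ ω, h (X (m, 0) ω) ∂P := fun i =>
    ((hident i).comp measurable_from_top).lintegral_eq
  have hoff : ∀ q : ℕ × ℕ, ∫⁻ ω in {ω | q ∈ (range (N ω)).offDiag},
      g (X (m, q.1) ω) * h (X (m, q.2) ω) ∂P =
      (∫⁻ ω, g (X (m, 0) ω) ∂P) * (∫⁻ ω, h (X (m, 0) ω) ∂P) *
        ∫⁻ ω in {ω | q ∈ (range (N ω)).offDiag}, 1 ∂P := by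
    rintro ⟨i, j⟩
    by_cases hij : i = j
    · subst hij; simp
    set A := {ω | (i, j) ∈ (range (N ω)).offDiag}
    have hj : (m, j) ∉ insert (m, i) S := by simp [Ne.symm hij, hS j]
    have hind : Measurable[sigmaOf X S] (A.indicator fun _ => (1 : ℝ≥0∞)) :=
      measurable_const.indicator (hA (i, j))
    have hF : Measurable[sigmaOf X (insert (m, i) S)]
        fun ω => A.indicator (fun _ => 1) ω * g (X (m, i) ω) :=
      (hind.mono (sigmaOf_mono (Set.subset_insert _ _)) le_rfl).mul
        (measurable_from_top.comp (measurable_sigmaOf (Set.mem_insert _ _)))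
    have hsplit : ∀ ω, A.indicator (fun ω => g (X (m, i) ω) * h (X (m, j) ω)) ω =
        A.indicator (fun _ => 1) ω * g (X (m, i) ω) * h (X (m, j) ω) := fun ω => by
      by_cases hω : ω ∈ A <;> simp [hω]
    rw [← lintegral_indicator (hle _ (hA _)), ← lintegral_indicator (hle _ (hA _)),
      lintegral_congr hsplit, lintegral_mul_comp_of_notMem hX hindep hj hF measurable_from_top,
      lintegral_mul_comp_of_notMem hX hindep (hS i) hind measurable_from_top, hg, hh]
    ring
  simp_rw [sum_mul_sum_eq_sum_offDiag_add]
  rw [lintegral_add_right _ (measurable_sum_range_of_measurable (hN.mono hle le_rfl)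
      (f := fun i ω => g (X (m, i) ω) * h (X (m, i) ω)) fun i => hmeas (i, i)),
    lintegral_finset_sum_eq_mul (fun q => hle _ (hA q)) hmeas measurable_const hoff]
  have hdiag := lintegral_mul_sum_range hX hindep hident hS (W := fun _ => 1)
    measurable_const hN fun x => g x * h x
  simp only [one_mul] at hdiag
  simp [hdiag, offDiag_card, Nat.mul_sub_one]

end OffspringSums

section NatValued

variable {Ω : Type*} [MeasurableSpace Ω] {P : Measure Ω} {F : Ω → ℕ}

theorem integral_natCast_eq_toReal_lintegral (hF : Measurable F) :
    ∫ ω, (F ω : ℝ) ∂P = (∫⁻ ω, (F ω : ℝ≥0∞) ∂P).toReal := by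
  rw [← integral_toReal (f := fun ω => (F ω : ℝ≥0∞)) (measurable_from_top.comp hF).aemeasurable
    (ae_of_all _ fun _ => ENNReal.natCast_lt_top _)]
  simp

theorem memLp_two_natCast_iff (hF : Measurable F) :
    MemLp (fun ω => (F ω : ℝ)) 2 P ↔ ∫⁻ ω, (F ω : ℝ≥0∞) ^ 2 ∂P < ⊤ := by
  have hF' : Measurable fun ω => (F ω : ℝ) := measurable_from_top.comp hF
  rw [memLp_two_iff_integrable_sq hF'.aestronglyMeasurable]
  simp [Integrable, HasFiniteIntegral, hF'.pow_const 2 |>.aestronglyMeasurable]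

theorem toReal_lintegral_mul_pred [IsFiniteMeasure P] (hF : Measurable F)
    (hF2 : MemLp (fun ω => (F ω : ℝ)) 2 P) :
    (∫⁻ ω, ((F ω * (F ω - 1) : ℕ) : ℝ≥0∞) ∂P).toReal =
      ∫ ω, (F ω : ℝ) ^ 2 ∂P - ∫ ω, (F ω : ℝ) ∂P := by
  rw [← integral_natCast_eq_toReal_lintegral (F := fun ω => F ω * (F ω - 1))
      (hF.mul (hF.sub measurable_const)),
    ← integral_sub hF2.integrable_sq (hF2.integrable one_le_two)]
  refine integral_congr_ae (ae_of_all _ fun ω => ?_)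
  rcases Nat.eq_zero_or_pos (F ω) with h | h
  · simp [h]
  · simp [Nat.cast_sub h]; ring

theorem lintegral_natCast_ite_eq_zero (hF : Measurable F) :
    ∫⁻ ω, ((if F ω = 0 then 1 else 0 : ℕ) : ℝ≥0∞) ∂P = P {ω | F ω = 0} := by
  rw [show {ω | F ω = 0} = F ⁻¹' {0} from rfl,
    ← lintegral_indicator_one (hF (measurableSet_singleton 0))]
  congr with ω
  by_cases h : F ω = 0 <;> simp [h]

end NatValued

section GenerationSizes

variable {Ω : Type*} {X : ℕ × ℕ → Ω → ℕ} {Z Zt : ℕ → Ω → ℕ} {m : ℕ}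

theorem Zt_le_Z (hZt : ∀ n ω, Zt n ω = ∑ i ∈ range (Z n ω), if X (n, i) ω = 0 then 1 else 0)
    (m : ℕ) (ω : Ω) : Zt m ω ≤ Z m ω := by
  rw [hZt, sum_boole]
  exact (card_filter_le _ _).trans (card_range _).le

variable (hZ0 : ∀ ω, Z 0 ω = 1) (hZ : ∀ n ω, Z (n + 1) ω = ∑ i ∈ range (Z n ω), X (n, i) ω)
  (hZt : ∀ n ω, Zt n ω = ∑ i ∈ range (Z n ω), if X (n, i) ω = 0 then 1 else 0)

include hZ0 hZ

theorem measurable_Z_sigmaOf (m : ℕ) :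
    Measurable[sigmaOf X {q | q.1 < m}] (Z m) := by
  induction m with
  | zero => rw [funext hZ0]; exact measurable_const
  | succ m ih =>
    rw [funext (hZ m)]
    exact measurable_sum_range_of_measurable
      (ih.mono (sigmaOf_mono fun q (hq : q.1 < m) => Nat.lt_succ_of_lt hq) le_rfl)
      fun i => measurable_sigmaOf (Nat.lt_succ_self m)

include hZt in
theorem measurable_Zt_sigmaOf (m : ℕ) :
    Measurable[sigmaOf X {q | q.1 < m + 1}] (Zt m) := by
  rw [funext (hZt m)]
  exact measurable_sum_range_of_measurable
    ((measurable_Z_sigmaOf hZ0 hZ m).mono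
      (sigmaOf_mono fun q (hq : q.1 < m) => Nat.lt_succ_of_lt hq) le_rfl)
    fun i => (measurable_from_top (f := fun x : ℕ => if x = 0 then 1 else 0)).comp
      (measurable_sigmaOf (Nat.lt_succ_self m))

variable [MeasurableSpace Ω] (hX : ∀ q, Measurable (X q))
include hX

theorem measurable_Z (m : ℕ) : Measurable (Z m) :=
  (measurable_Z_sigmaOf hZ0 hZ m).mono (sigmaOf_le hX) le_rfl

include hZt in
theorem measurable_Zt (m : ℕ) : Measurable (Zt m) :=
  (measurable_Zt_sigmaOf hZ0 hZ hZt m).mono (sigmaOf_le hX) le_rfl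

variable {P : Measure Ω} (hindep : iIndepFun X P)
  (hident : ∀ n i, IdentDistrib (X (n, i)) (X (n, 0)) P P)
include hindep hident

theorem lintegral_mul_Z_succ {W : Ω → ℝ≥0∞}
    (hW : Measurable[sigmaOf X {q | q.1 < m}] W) :
    ∫⁻ ω, W ω * Z (m + 1) ω ∂P = (∫⁻ ω, (X (m, 0) ω : ℝ≥0∞) ∂P) * ∫⁻ ω, W ω * Z m ω ∂P := by
  simp_rw [hZ m, Nat.cast_sum]
  exact lintegral_mul_sum_range hX hindep (hident m) (fun _ => lt_irrefl m) hW
    (measurable_Z_sigmaOf hZ0 hZ m) Nat.cast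

theorem lintegral_Z_succ :
    ∫⁻ ω, (Z (m + 1) ω : ℝ≥0∞) ∂P =
      (∫⁻ ω, (X (m, 0) ω : ℝ≥0∞) ∂P) * ∫⁻ ω, (Z m ω : ℝ≥0∞) ∂P := by
  simpa using lintegral_mul_Z_succ hZ0 hZ hX hindep hident (W := fun _ => 1) measurable_const

theorem lintegral_Z_succ_sq :
    ∫⁻ ω, (Z (m + 1) ω : ℝ≥0∞) ^ 2 ∂P =
      (∫⁻ ω, (X (m, 0) ω : ℝ≥0∞) ∂P) ^ 2 * ∫⁻ ω, ((Z m ω * (Z m ω - 1) : ℕ) : ℝ≥0∞) ∂P +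
        (∫⁻ ω, (X (m, 0) ω : ℝ≥0∞) ^ 2 ∂P) * ∫⁻ ω, (Z m ω : ℝ≥0∞) ∂P := by
  simp_rw [sq, hZ m, Nat.cast_sum]
  exact lintegral_sum_mul_sum hX hindep (hident m) (fun _ => lt_irrefl m)
    (measurable_Z_sigmaOf hZ0 hZ m) Nat.cast Nat.cast

theorem memLp_Z [IsFiniteMeasure P] (hL2 : ∀ m, MemLp (fun ω => (X (m, 0) ω : ℝ)) 2 P)
    (m : ℕ) : MemLp (fun ω => (Z m ω : ℝ)) 2 P := by
  have hle_sq : ∀ x : ℕ, (x : ℝ≥0∞) ≤ (x : ℝ≥0∞) ^ 2 := fun x => by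
    exact_mod_cast Nat.le_self_pow two_ne_zero x
  have hpred_le_sq : ∀ x : ℕ, ((x * (x - 1) : ℕ) : ℝ≥0∞) ≤ (x : ℝ≥0∞) ^ 2 := fun x => by
    rw [sq]; exact_mod_cast Nat.mul_le_mul_left x (Nat.sub_le x 1)
  rw [memLp_two_natCast_iff (measurable_Z hZ0 hZ hX m)]
  induction m with
  | zero => simp [hZ0]
  | succ m ih =>
    have hX2 := (memLp_two_natCast_iff (hX _)).1 (hL2 m)
    have hX1 := (lintegral_mono fun ω => hle_sq (X (m, 0) ω)).trans_lt hX2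
    rw [lintegral_Z_succ_sq hZ0 hZ hX hindep hident]
    exact ENNReal.add_lt_top.2
      ⟨ENNReal.mul_lt_top (ENNReal.pow_lt_top hX1)
          ((lintegral_mono fun ω => hpred_le_sq _).trans_lt ih),
        ENNReal.mul_lt_top hX2 ((lintegral_mono fun ω => hle_sq _).trans_lt ih)⟩

include hZt

theorem lintegral_mul_Zt {W : Ω → ℝ≥0∞}
    (hW : Measurable[sigmaOf X {q | q.1 < m}] W) :
    ∫⁻ ω, W ω * Zt m ω ∂P = P {ω | X (m, 0) ω = 0} * ∫⁻ ω, W ω * Z m ω ∂P := by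
  simp_rw [hZt m, Nat.cast_sum]
  rw [lintegral_mul_sum_range hX hindep (hident m) (fun _ => lt_irrefl m) hW
    (measurable_Z_sigmaOf hZ0 hZ m) fun x => ((if x = 0 then 1 else 0 : ℕ) : ℝ≥0∞),
    lintegral_natCast_ite_eq_zero (hX _)]

theorem memLp_Zt [IsFiniteMeasure P] (hL2 : ∀ m, MemLp (fun ω => (X (m, 0) ω : ℝ)) 2 P)
    (m : ℕ) : MemLp (fun ω => (Zt m ω : ℝ)) 2 P :=
  (memLp_Z hZ0 hZ hX hindep hident hL2 m).of_le
    (measurable_from_top.comp (measurable_Zt hZ0 hZ hZt hX m)).aestronglyMeasurable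
    (ae_of_all _ fun ω => by simpa using Zt_le_Z hZt m ω)

theorem integral_Zt (m : ℕ) :
    ∫ ω, (Zt m ω : ℝ) ∂P = (P {ω | X (m, 0) ω = 0}).toReal * ∫ ω, (Z m ω : ℝ) ∂P := by
  have h := lintegral_mul_Zt hZ0 hZ hZt hX hindep hident (m := m) (W := fun _ => 1)
    measurable_const
  simp only [one_mul] at h
  rw [integral_natCast_eq_toReal_lintegral (measurable_Zt hZ0 hZ hZt hX m),
    integral_natCast_eq_toReal_lintegral (measurable_Z hZ0 hZ hX m), h,
    ENNReal.toReal_mul]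

theorem lintegral_Zt_mul_Z_succ :
    ∫⁻ ω, (Zt m ω : ℝ≥0∞) * Z (m + 1) ω ∂P = P {ω | X (m, 0) ω = 0} *
      (∫⁻ ω, (X (m, 0) ω : ℝ≥0∞) ∂P) * ∫⁻ ω, ((Z m ω * (Z m ω - 1) : ℕ) : ℝ≥0∞) ∂P := by
  simp_rw [hZt m, hZ m, Nat.cast_sum]
  rw [lintegral_sum_mul_sum hX hindep (hident m) (fun _ => lt_irrefl m)
    (measurable_Z_sigmaOf hZ0 hZ m) (fun x => ((if x = 0 then 1 else 0 : ℕ) : ℝ≥0∞)) Nat.cast,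
    lintegral_natCast_ite_eq_zero (hX _)]
  have hleaf : ∀ x : ℕ, ((if x = 0 then 1 else 0 : ℕ) : ℝ≥0∞) * x = 0 := by
    intro x; split_ifs with h <;> simp [h]
  simp only [hleaf, lintegral_zero, zero_mul, add_zero]

theorem lintegral_Zt_mul_Zt_mul_lintegral_Z (n : ℕ) {k : ℕ} (hk : 0 < k) :
    (∫⁻ ω, (Zt n ω : ℝ≥0∞) * Zt (n + k) ω ∂P) * ∫⁻ ω, (Z n ω : ℝ≥0∞) ∂P =
      P {ω | X (n + k, 0) ω = 0} * P {ω | X (n, 0) ω = 0} *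
        (∫⁻ ω, ((Z n ω * (Z n ω - 1) : ℕ) : ℝ≥0∞) ∂P) * ∫⁻ ω, (Z (n + k) ω : ℝ≥0∞) ∂P := by
  have hW : ∀ j, Measurable[sigmaOf X {q | q.1 < n + 1 + j}] fun ω => (Zt n ω : ℝ≥0∞) :=
    fun j => measurable_from_top.comp ((measurable_Zt_sigmaOf hZ0 hZ hZt n).mono
      (sigmaOf_mono fun q (hq : q.1 < n + 1) => show q.1 < n + 1 + j by omega) le_rfl)
  have hchain : ∀ j, (∫⁻ ω, (Zt n ω : ℝ≥0∞) * Z (n + 1 + j) ω ∂P) * ∫⁻ ω, (Z n ω : ℝ≥0∞) ∂P =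
      P {ω | X (n, 0) ω = 0} * (∫⁻ ω, ((Z n ω * (Z n ω - 1) : ℕ) : ℝ≥0∞) ∂P) *
        ∫⁻ ω, (Z (n + 1 + j) ω : ℝ≥0∞) ∂P := by
    intro j
    induction j with
    | zero =>
      rw [add_zero, lintegral_Zt_mul_Z_succ hZ0 hZ hZt hX hindep hident,
        lintegral_Z_succ hZ0 hZ hX hindep hident]
      ring
    | succ j ih =>
      rw [← add_assoc, lintegral_mul_Z_succ hZ0 hZ hX hindep hident (hW j),
        lintegral_Z_succ hZ0 hZ hX hindep hident, mul_assoc, ih]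
      ring
  obtain ⟨j, rfl⟩ := Nat.exists_eq_add_of_lt hk
  rw [show n + (0 + j + 1) = n + 1 + j by omega,
    lintegral_mul_Zt hZ0 hZ hZt hX hindep hident (hW j), mul_assoc, hchain]
  ring

theorem integral_Zt_mul_Zt_mul_integral_Z [IsFiniteMeasure P]
    (hL2 : ∀ m, MemLp (fun ω => (X (m, 0) ω : ℝ)) 2 P) (n : ℕ) {k : ℕ} (hk : 0 < k) :
    (∫ ω, (Zt n ω : ℝ) * Zt (n + k) ω ∂P) * ∫ ω, (Z n ω : ℝ) ∂P =
      (P {ω | X (n + k, 0) ω = 0}).toReal * (P {ω | X (n, 0) ω = 0}).toReal *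
        (∫ ω, (Z n ω : ℝ) ^ 2 ∂P - ∫ ω, (Z n ω : ℝ) ∂P) * ∫ ω, (Z (n + k) ω : ℝ) ∂P := by
  have h := congrArg ENNReal.toReal
    (lintegral_Zt_mul_Zt_mul_lintegral_Z hZ0 hZ hZt hX hindep hident n hk)
  have hZtZt := integral_natCast_eq_toReal_lintegral (P := P)
    (F := fun ω => Zt n ω * Zt (n + k) ω)
    ((measurable_Zt hZ0 hZ hZt hX n).mul (measurable_Zt hZ0 hZ hZt hX (n + k)))
  push_cast at hZtZt
  simp only [ENNReal.toReal_mul, toReal_lintegral_mul_pred (measurable_Z hZ0 hZ hX n)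
    (memLp_Z hZ0 hZ hX hindep hident hL2 n)] at h
  rwa [← hZtZt, ← integral_natCast_eq_toReal_lintegral (measurable_Z hZ0 hZ hX n),
    ← integral_natCast_eq_toReal_lintegral (measurable_Z hZ0 hZ hX (n + k))] at h

end GenerationSizes

/-- For an IGWT and `k > 0`,
`Cov(Z̃_n, Z̃_{n+k}) = p_{n+k} p_n m_{n+k} (s_n²/m_n - 1)`. -/
theorem igwt_leaves_cov
    {Ω : Type*} [MeasurableSpace Ω] (P : Measure Ω) [IsProbabilityMeasure P]
    (X : ℕ × ℕ → Ω → ℕ) (Z Zt : ℕ → Ω → ℕ) (p : ℕ → ℝ)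
    (hXmeas : ∀ q, Measurable (X q))
    (hindep : iIndepFun X P)
    (hident : ∀ n i, IdentDistrib (X (n, i)) (X (n, 0)) P P)
    (hL2 : ∀ n i, MemLp (fun ω => (X (n, i) ω : ℝ)) 2 P)
    (hp : ∀ n, (P {ω | X (n, 0) ω = 0}).toReal = p n)
    (hZ0 : ∀ ω, Z 0 ω = 1)
    (hZ : ∀ n ω, Z (n + 1) ω = ∑ i ∈ Finset.range (Z n ω), X (n, i) ω)
    (hZt : ∀ n ω, Zt n ω = ∑ i ∈ Finset.range (Z n ω), if X (n, i) ω = 0 then 1 else 0)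
    (n k : ℕ) (hk : 0 < k)
    (hm : 0 < ∫ ω, (Z n ω : ℝ) ∂P) :
    cov P (fun ω => (Zt n ω : ℝ)) (fun ω => (Zt (n + k) ω : ℝ)) =
      p (n + k) * p n * (∫ ω, (Z (n + k) ω : ℝ) ∂P) *
        (variance (fun ω => (Z n ω : ℝ)) P / (∫ ω, (Z n ω : ℝ) ∂P) - 1) := by
  have hZL2 := memLp_Z hZ0 hZ hXmeas hindep hident fun m => hL2 m 0
  have hZtL2 := memLp_Zt hZ0 hZ hZt hXmeas hindep hident fun m => hL2 m 0
  have hprod := integral_Zt_mul_Zt_mul_integral_Z hZ0 hZ hZt hXmeas hindep hident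
    (fun m => hL2 m 0) n hk
  rw [hp, hp] at hprod
  rw [show cov P _ _ = covariance _ _ P from rfl, covariance_eq_sub (hZtL2 n) (hZtL2 (n + k)),
    variance_eq_sub (hZL2 n), integral_Zt hZ0 hZ hZt hXmeas hindep hident,
    integral_Zt hZ0 hZ hZt hXmeas hindep hident, hp, hp]
  simp only [Pi.mul_apply, Pi.pow_apply]
  field_simp
  linear_combination hprod
end

section
/- For the Poisson-zero mixture distribution with λ = 0 (i.e., a two-point distribution on {0,2} with P(0)=p, P(2)=1−p), the mean is μ = 2(1−p) and the variance is σ² = 2μ(1 − μ/2); consequently, among all Poisson-zero mixtures with a given mean μ ∈ [0,2], the minimal attainable variance is 2μ(1 − μ/2). -/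
/-- for the Poisson-zero mixture with `λ = 0`, i.e. the two-point
distribution on `{0,2}`, the mean is `μ = 2(1-p)` and the variance is
`2μ(1-μ/2)`; moreover `2μ(1-μ/2)` is the minimal variance among all Poisson-zero
mixtures with mean `μ ∈ [0,2]`. -/
theorem poisson_zero_mixture_min_variance_small_mean
    (p : ℝ) (hp : p ∈ Set.Icc (0 : ℝ) 1) :
    let m := 2 * (1 - p)
    (1 - p) * ((0 : ℝ) + 2) = m ∧
    (1 - p) * ((0 : ℝ) + p * ((0 : ℝ) + 2) ^ 2) = 2 * m * (1 - m / 2) ∧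
    (∀ p' l' : ℝ, p' ∈ Set.Icc (0 : ℝ) 1 → 0 ≤ l' →
      (1 - p') * (l' + 2) = m →
      2 * m * (1 - m / 2) ≤ (1 - p') * (l' + p' * (l' + 2) ^ 2)) := by
  obtain ⟨hp0, hp1⟩ := hp
  refine ⟨by ring, by ring, ?_⟩
  intro p' l' hp' hl' hm
  obtain ⟨hp'0, hp'1⟩ := hp'
  have hq : 0 ≤ 1 - p' := by linarith
  nlinarith [mul_nonneg hq hl', mul_nonneg (mul_nonneg hq hl') hl',
    mul_nonneg (mul_nonneg hq hq) hl', mul_nonneg (mul_nonneg hq hl') (mul_nonneg hq hl'),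
    sq_nonneg (l' * (1 - p')), mul_nonneg hp'0 hl', hm]
end

section
/- For the Poisson-zero mixture distribution with p = 0 (a Poisson(λ) distribution translated by 2), the variance equals μ − 2 where μ = λ + 2 is the mean; hence for any Poisson-zero mixture with mean μ > 2 the variance is at least μ − 2. -/
/-- for the Poisson-zero mixture with `p = 0` (a translated Poisson),
the variance equals `μ - 2` with `μ = λ + 2`; and any Poisson-zero mixture with
mean `μ > 2` has variance at least `μ - 2`. -/
theorem poisson_zero_mixture_min_variance_large_mean
    (l : ℝ) (hl : 0 ≤ l) :
    ((1 - (0 : ℝ)) * (l + (0 : ℝ) * (l + 2) ^ 2) = (l + 2) - 2) ∧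
    (∀ m p' l' : ℝ, 2 < m → p' ∈ Set.Icc (0 : ℝ) 1 → 0 ≤ l' →
      (1 - p') * (l' + 2) = m →
      m - 2 ≤ (1 - p') * (l' + p' * (l' + 2) ^ 2)) := by
  constructor
  · ring
  · rintro m p' l' hm ⟨hp0, hp1⟩ hl' hmean
    nlinarith [mul_nonneg (mul_nonneg (sub_nonneg.2 hp1) hp0) (sq_nonneg (l' + 2))]
end
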